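/- arXiv:2408.08259 — 2 statements merged into one kernel-verified Lean document; each statement's English description precedes it below -/
import Mathlib

section
/- Let (θ,ρ) ∈ ℝ^{2d}, h > 0, R ≥ 1, M ∈ ℕ, B ∈ {0,1}^M. Write ℓ_min = ℓ_min(θ,ρ,B,h,R), a_T = a_{ℓ_min}(B), b_T = b_{ℓ_min}(B), let L ∈ [a_T : b_T], and set B* = B*(L, a_T, b_T, B). Then for every ℓ < ℓ_min, the collection T([a_ℓ(B*) + L : b_ℓ(B*) + L]) ∪ T([ã_{ℓ+1}(B*) + L : b̃_{ℓ+1}(B*) + L]) is sub-U-turn free for (θ,ρ,h,R); that is, 𝟙_Uturn(ã,b̃,θ,ρ,h,R) = 0 for every interval [ã:b̃] in this union. -/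
open MeasureTheory

noncomputable section

/-! ### Combinatorial definitions for NUTS orbit selection -/

/-- Floor midpoint `⌊(a+b)/2⌋`. -/
def mid (a b : ℤ) : ℤ := (a + b) / 2

/-- `(−1)^x` for a bit `x`. -/
def signBit (x : Bool) : ℤ := if x then -1 else 1

/-- Left endpoint `a_ℓ(B)` of the orbit built from the Bernoulli directions `B` (1-indexed). -/
def aEnd (B : ℕ → Bool) : ℕ → ℤ
  | 0 => 0
  | ℓ + 1 => min (aEnd B ℓ) (aEnd B ℓ + signBit (B (ℓ + 1)) * 2 ^ ℓ)

/-- Right endpoint `b_ℓ(B)`. -/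
def bEnd (B : ℕ → Bool) : ℕ → ℤ
  | 0 => 0
  | ℓ + 1 => max (bEnd B ℓ) (bEnd B ℓ + signBit (B (ℓ + 1)) * 2 ^ ℓ)

/-- Proposed extension endpoint `ã_ℓ(B) = a_{ℓ−1}(B) + (−1)^{B_ℓ} 2^{ℓ−1}` (for `ℓ ≥ 1`). -/
def aT (B : ℕ → Bool) (ℓ : ℕ) : ℤ := aEnd B (ℓ - 1) + signBit (B ℓ) * 2 ^ (ℓ - 1)

/-- Proposed extension endpoint `b̃_ℓ(B) = b_{ℓ−1}(B) + (−1)^{B_ℓ} 2^{ℓ−1}` (for `ℓ ≥ 1`). -/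
def bT (B : ℕ → Bool) (ℓ : ℕ) : ℤ := bEnd B (ℓ - 1) + signBit (B ℓ) * 2 ^ (ℓ - 1)

/-- The binary string `β(L,a,b)`: `beta ℓ L a b i` is the `i`-th bit (1-indexed) of
`(β_i(L,a,b))_{i ∈ [1:ℓ]}`, where `[a:b]` is an interval with `b − a + 1 = 2^ℓ`. -/
def beta : ℕ → ℤ → ℤ → ℤ → ℕ → Bool
  | 0, _, _, _, _ => false
  | ℓ + 1, L, a, b, i =>
      if i = ℓ + 1 then decide (mid a b + 1 ≤ L)
      else if mid a b + 1 ≤ L then beta ℓ L (mid a b + 1) b i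
      else beta ℓ L a (mid a b) i

/-- The transformed sequence `B*(L,a,b,B)`: bits `1..ℓ` come from `β(L,a,b)`, the rest from `B`. -/
def bstar (ℓ : ℕ) (L a b : ℤ) (B : ℕ → Bool) : ℕ → Bool :=
  fun i => if 1 ≤ i ∧ i ≤ ℓ then beta ℓ L a b i else B i

/-- The domain `D`: tuples `(B, ℓ, a, b, L)` with `ℓ ∈ [1:M]`, `a = a_ℓ(B)`, `b = b_ℓ(B)`,
`a ≤ L ≤ b`. -/
def memD (M : ℕ) (B : ℕ → Bool) (ℓ : ℕ) (a b L : ℤ) : Prop :=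
  1 ≤ ℓ ∧ ℓ ≤ M ∧ a = aEnd B ℓ ∧ b = bEnd B ℓ ∧ a ≤ L ∧ L ≤ b

/-- The levels of the binary tree of subintervals of `[a:b]`: `treeLevel a b k` is the family of
intervals (coded as pairs) obtained from `[a:b]` by `k` successive halvings; with
`b − a + 1 = 2^ℓ` this is `T_{ℓ−k}([a:b])` of the paper. -/
def treeLevel (a b : ℤ) : ℕ → Set (ℤ × ℤ)
  | 0 => {(a, b)}
  | k + 1 => {p | ∃ q ∈ treeLevel a b k,
      p = (q.1, mid q.1 q.2) ∨ p = (mid q.1 q.2 + 1, q.2)}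

/-- The binary tree `T([a:b]) = ∪_{j=0}^{ℓ} T_j([a:b])` of subintervals of an interval `[a:b]`
with `b − a + 1 = 2^ℓ`. -/
def tree (ℓ : ℕ) (a b : ℤ) : Set (ℤ × ℤ) := ⋃ k ≤ ℓ, treeLevel a b k

/-! ### Leapfrog dynamics -/

/-- The state space `ℝ^d`. -/
abbrev ES (d : ℕ) := EuclideanSpace ℝ (Fin d)

/-- The momentum flip `S(θ,ρ) = (θ,−ρ)`. -/
def flipMom {d : ℕ} (p : ES d × ES d) : ES d × ES d := (p.1, -p.2)

/-- One leapfrog step of size `h` for the potential `U`. -/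
def leapfrog {d : ℕ} (U : ES d → ℝ) (h : ℝ) (p : ES d × ES d) : ES d × ES d :=
  let ρh := p.2 - (h / 2) • gradient U p.1
  let θ' := p.1 + h • ρh
  (θ', ρh - (h / 2) • gradient U θ')

/-- Integer iterates `Φ_h^i`, `i ∈ ℤ`, of the leapfrog integrator (negative iterates use the
inverse `S ∘ Φ_h ∘ S`). -/
def leapfrogIter {d : ℕ} (U : ES d → ℝ) (h : ℝ) : ℤ → ES d × ES d → ES d × ES d
  | Int.ofNat n => (leapfrog U h)^[n]
  | Int.negSucc n => (flipMom ∘ leapfrog U h ∘ flipMom)^[n + 1]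

/-- The Hamiltonian `H(θ,ρ) = U(θ) + |ρ|²/2`. -/
def Ham {d : ℕ} (U : ES d → ℝ) (p : ES d × ES d) : ℝ := U p.1 + (1 / 2) * ‖p.2‖ ^ 2

open Classical in
/-- The U-turn indicator `𝟙_Uturn(a,b,θ,ρ,h,R)` (coarse step size `hs`, fine step `hs/R`). -/
def uturnInd {d : ℕ} (U : ES d → ℝ) (hs : ℝ) (R : ℕ) (a b : ℤ) (p : ES d × ES d) : ℕ :=
  let qm := leapfrogIter U (hs / R) (R * a) p
  let qp := leapfrogIter U (hs / R) (R * b) p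
  if (inner ℝ qp.2 (qp.1 - qm.1) : ℝ) < 0 ∨ (inner ℝ qm.2 (qp.1 - qm.1) : ℝ) < 0 then 1 else 0

/-- The sub-U-turn indicator `𝟙_subUturn(a,b,θ,ρ,h,R)`, defined recursively by halving. -/
def subUturnInd {d : ℕ} (U : ES d → ℝ) (hs : ℝ) (R : ℕ) (p : ES d × ES d) (a b : ℤ) : ℕ :=
  if h : a < b then
    max (max (subUturnInd U hs R p a (mid a b)) (subUturnInd U hs R p (mid a b + 1) b))
      (uturnInd U hs R a b p)
  else 0
termination_by (b - a).toNat
decreasing_by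
  · have h1 : a ≤ mid a b := by unfold mid; omega
    have h2 : mid a b < b := by unfold mid; omega
    omega
  · have h1 : a ≤ mid a b := by unfold mid; omega
    have h2 : mid a b < b := by unfold mid; omega
    omega

/-- The number of doublings `ℓ_min(θ,ρ,B,h,R)` selected by the no-U-turn procedure with at most
`2^M` leapfrog iterates. -/
def ellMin {d : ℕ} (U : ES d → ℝ) (hs : ℝ) (R : ℕ) (M : ℕ) (B : ℕ → Bool)
    (p : ES d × ES d) : ℕ :=
  sInf ({ℓ | 1 ≤ ℓ ∧ ℓ ≤ M - 1 ∧
      (uturnInd U hs R (aEnd B ℓ) (bEnd B ℓ) p = 1 ∨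
        subUturnInd U hs R p (aT B (ℓ + 1)) (bT B (ℓ + 1)) = 1)} ∪ {M})

/-- The categorical (Boltzmann) index-selection kernel `Q(L | θ, ρ, a, b, h, R)`. -/
def Qkernel {d : ℕ} (U : ES d → ℝ) (hs : ℝ) (R : ℕ) (p : ES d × ES d)
    (a b L : ℤ) : ℝ :=
  if a ≤ L ∧ L ≤ b then
    Real.exp (-Ham U (leapfrogIter U (hs / R) (R * L) p)) /
      ∑ k ∈ Finset.Icc a b, Real.exp (-Ham U (leapfrogIter U (hs / R) (R * k) p))
  else 0

/-! ### The standard normal target -/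

/-- One leapfrog step of size `h` for the standard normal potential `U(θ) = |θ|²/2`
(for which `∇U(θ) = θ`). -/
def gaussLeapfrog {d : ℕ} (h : ℝ) (p : ES d × ES d) : ES d × ES d :=
  let ρh := p.2 - (h / 2) • p.1
  let θ' := p.1 + h • ρh
  (θ', ρh - (h / 2) • θ')

/-- Integer iterates of the standard normal leapfrog integrator. -/
def gaussLeapfrogIter {d : ℕ} (h : ℝ) : ℤ → ES d × ES d → ES d × ES d
  | Int.ofNat n => (gaussLeapfrog h)^[n]
  | Int.negSucc n => (flipMom ∘ gaussLeapfrog h ∘ flipMom)^[n + 1]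

/-- The standard normal Hamiltonian `H(θ,ρ) = (|θ|² + |ρ|²)/2`. -/
def gaussHam {d : ℕ} (p : ES d × ES d) : ℝ := (1 / 2) * (‖p.1‖ ^ 2 + ‖p.2‖ ^ 2)

/-- The modified Hamiltonian `H_h(θ,ρ) = (1 − h²/4)|θ|²/2 + |ρ|²/2` preserved by the standard
normal leapfrog integrator for `h ∈ (0,2)`. -/
def gaussHamMod {d : ℕ} (h : ℝ) (p : ES d × ES d) : ℝ :=
  (1 / 2) * (1 - h ^ 2 / 4) * ‖p.1‖ ^ 2 + (1 / 2) * ‖p.2‖ ^ 2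

end

/-! Below `ℓ_min` every accepted orbit `[a_ℓ(B):b_ℓ(B)]` and every proposed extension
`[ã_{ℓ+1}(B):b̃_{ℓ+1}(B)]` is sub-U-turn free, by induction on `ℓ`, since the two halves of
`[a_{ℓ+1}(B):b_{ℓ+1}(B)]` are `[a_ℓ(B):b_ℓ(B)]` and `[ã_{ℓ+1}(B):b̃_{ℓ+1}(B)]`. Hence both halves of
`[a_T:b_T]` are sub-U-turn free, and so is every node of depth at least one in its binary tree.
The sequence `B*` is built so that its orbits, shifted by `L`, are the nodes of that tree containing
`L`: the orbit of level `ℓ` sits at depth `ℓ_min - ℓ`, and the extension of level `ℓ + 1` is its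
sibling. All intervals in question therefore lie strictly below the root. -/

section Tree

lemma treeLevel_one (a b : ℤ) : treeLevel a b 1 = {(a, mid a b), (mid a b + 1, b)} := by
  ext q
  simp [treeLevel]

lemma mem_treeLevel_add {a b : ℤ} {k : ℕ} {q : ℤ × ℤ} (j : ℕ) :
    q ∈ treeLevel a b (k + j) ↔ ∃ r ∈ treeLevel a b k, q ∈ treeLevel r.1 r.2 j := by
  induction j generalizing q with
  | zero => simp [treeLevel]
  | succ j ih =>
    change (∃ q' ∈ treeLevel a b (k + j), _) ↔ ∃ r ∈ treeLevel a b k, ∃ q' ∈ treeLevel r.1 r.2 j, _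
    simp_rw [ih]
    constructor
    · rintro ⟨q', ⟨r, hr, hq'⟩, hchild⟩
      exact ⟨r, hr, q', hq', hchild⟩
    · rintro ⟨r, hr, q', hq', hchild⟩
      exact ⟨q', ⟨r, hr, hq'⟩, hchild⟩

lemma treeLevel_length {a b : ℤ} {k j : ℕ} (hab : b = a + 2 ^ (k + j) - 1) {q : ℤ × ℤ}
    (hq : q ∈ treeLevel a b k) : q.2 = q.1 + 2 ^ j - 1 := by
  induction k generalizing j q with
  | zero => simp_all [treeLevel]
  | succ k ih =>
    obtain ⟨r, hr, rfl | rfl⟩ := hq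
    all_goals
      have hlen := ih (j := j + 1) (by rw [hab]; ring_nf) hr
      have hpow : (2 : ℤ) ^ (j + 1) = 2 * 2 ^ j := by ring
      have hmid : mid r.1 r.2 = r.1 + 2 ^ j - 1 := by unfold mid; omega
      dsimp only
      omega

end Tree

section Orbit

lemma bEnd_eq_aEnd_add (C : ℕ → Bool) (ℓ : ℕ) : bEnd C ℓ = aEnd C ℓ + 2 ^ ℓ - 1 := by
  induction ℓ with
  | zero => simp [aEnd, bEnd]
  | succ ℓ ih =>
    have hpow : (2 : ℤ) ^ (ℓ + 1) = 2 * 2 ^ ℓ := by ring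
    cases C (ℓ + 1) <;> simp only [aEnd, bEnd, signBit] <;> grind

lemma aEnd_congr {C C' : ℕ → Bool} {ℓ : ℕ} (h : ∀ i, 1 ≤ i → i ≤ ℓ → C i = C' i) :
    aEnd C ℓ = aEnd C' ℓ := by
  induction ℓ with
  | zero => rfl
  | succ ℓ ih =>
    rw [aEnd, aEnd, ih fun i h1 h2 => h i h1 (by omega), h (ℓ + 1) (by omega) le_rfl]

lemma bEnd_congr {C C' : ℕ → Bool} {ℓ : ℕ} (h : ∀ i, 1 ≤ i → i ≤ ℓ → C i = C' i) :
    bEnd C ℓ = bEnd C' ℓ := by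
  induction ℓ with
  | zero => rfl
  | succ ℓ ih =>
    rw [bEnd, bEnd, ih fun i h1 h2 => h i h1 (by omega), h (ℓ + 1) (by omega) le_rfl]

lemma treeLevel_one_orbit_succ (C : ℕ → Bool) (ℓ : ℕ) (L : ℤ) :
    treeLevel (aEnd C (ℓ + 1) + L) (bEnd C (ℓ + 1) + L) 1 =
      {(aEnd C ℓ + L, bEnd C ℓ + L), (aT C (ℓ + 1) + L, bT C (ℓ + 1) + L)} := by
  have hlen := bEnd_eq_aEnd_add C ℓ
  have hpos : (0 : ℤ) < 2 ^ ℓ := by positivity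
  have hpow : (2 : ℤ) ^ (ℓ + 1) = 2 * 2 ^ ℓ := by ring
  rw [treeLevel_one]
  ext ⟨x, y⟩
  cases hC : C (ℓ + 1) <;>
    simp only [aEnd, bEnd, aT, bT, mid, signBit, hC, Nat.add_sub_cancel, Set.mem_insert_iff,
      Set.mem_singleton_iff, Prod.mk.injEq, Bool.false_eq_true, if_true, if_false] <;>
    omega

lemma beta_orbit_mem_treeLevel (n : ℕ) {a b L : ℤ} (hab : b = a + 2 ^ n - 1) (haL : a ≤ L)
    (hLb : L ≤ b) {ℓ : ℕ} (hℓ : ℓ ≤ n) :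
    (aEnd (beta n L a b) ℓ + L, bEnd (beta n L a b) ℓ + L) ∈ treeLevel a b (n - ℓ) := by
  induction n generalizing a b ℓ with
  | zero =>
    obtain rfl : ℓ = 0 := by omega
    simp only [aEnd, bEnd, Nat.sub_self, treeLevel, Set.mem_singleton_iff, Prod.mk.injEq]
    omega
  | succ n ih =>
    set sgn := signBit (beta (n + 1) L a b (n + 1)) with hsgn
    obtain ⟨a', b', hhalf, hab', haL', hLb', hbeta, hroot⟩ : ∃ a' b',
        (a', b') ∈ treeLevel a b 1 ∧ b' = a' + 2 ^ n - 1 ∧ a' ≤ L ∧ L ≤ b' ∧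
          (∀ i ≤ n, beta (n + 1) L a b i = beta n L a' b' i) ∧
          a = min a' (a' + sgn * 2 ^ n) ∧ b = max b' (b' + sgn * 2 ^ n) := by
      have hpow : (2 : ℤ) ^ (n + 1) = 2 * 2 ^ n := by ring
      have hmid : mid a b = a + 2 ^ n - 1 := by unfold mid; omega
      have hpos : (0 : ℤ) < 2 ^ n := by positivity
      by_cases hc : mid a b + 1 ≤ L
      · refine ⟨mid a b + 1, b, by simp [treeLevel_one], by omega, hc, hLb,
          fun i hi => by simp [beta, hc, show i ≠ n + 1 by omega], ?_⟩
        simp only [sgn, beta, if_true, hc, decide_true, signBit]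
        omega
      · refine ⟨a, mid a b, by simp [treeLevel_one], by omega, haL, by omega,
          fun i hi => by simp [beta, hc, show i ≠ n + 1 by omega], ?_⟩
        simp only [sgn, beta, if_true, hc, decide_false, signBit, Bool.false_eq_true, if_false]
        omega
    have haEnd {ℓ} (hℓ : ℓ ≤ n) : aEnd (beta (n + 1) L a b) ℓ = aEnd (beta n L a' b') ℓ :=
      aEnd_congr fun i _ hi => hbeta i (hi.trans hℓ)
    have hbEnd {ℓ} (hℓ : ℓ ≤ n) : bEnd (beta (n + 1) L a b) ℓ = bEnd (beta n L a' b') ℓ :=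
      bEnd_congr fun i _ hi => hbeta i (hi.trans hℓ)
    rcases Nat.lt_or_ge ℓ (n + 1) with hℓn | hℓn
    · rw [show n + 1 - ℓ = 1 + (n - ℓ) by omega, mem_treeLevel_add, haEnd (by omega),
        hbEnd (by omega)]
      exact ⟨(a', b'), hhalf, ih hab' haL' hLb' (by omega)⟩
    · obtain rfl : ℓ = n + 1 := by omega
      have hprev := ih hab' haL' hLb' le_rfl
      simp only [Nat.sub_self, treeLevel, Set.mem_singleton_iff, Prod.mk.injEq] at hprev ⊢
      rw [aEnd, bEnd, ← hsgn, haEnd le_rfl, hbEnd le_rfl]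
      omega

lemma bstar_orbit_mem_treeLevel (n : ℕ) {a b L : ℤ} (hab : b = a + 2 ^ n - 1) (haL : a ≤ L)
    (hLb : L ≤ b) (B : ℕ → Bool) {ℓ : ℕ} (hℓ : ℓ ≤ n) :
    (aEnd (bstar n L a b B) ℓ + L, bEnd (bstar n L a b B) ℓ + L) ∈ treeLevel a b (n - ℓ) := by
  have hagree : ∀ i, 1 ≤ i → i ≤ ℓ → bstar n L a b B i = beta n L a b i :=
    fun i h1 h2 => if_pos ⟨h1, h2.trans hℓ⟩
  rw [aEnd_congr hagree, bEnd_congr hagree]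
  exact beta_orbit_mem_treeLevel n hab haL hLb hℓ

lemma bstar_extension_mem_treeLevel (n : ℕ) {a b L : ℤ} (hab : b = a + 2 ^ n - 1) (haL : a ≤ L)
    (hLb : L ≤ b) (B : ℕ → Bool) {ℓ : ℕ} (hℓ : ℓ < n) :
    (aT (bstar n L a b B) (ℓ + 1) + L, bT (bstar n L a b B) (ℓ + 1) + L) ∈
      treeLevel a b (n - ℓ) := by
  rw [show n - ℓ = n - (ℓ + 1) + 1 by omega, mem_treeLevel_add]
  refine ⟨_, bstar_orbit_mem_treeLevel n hab haL hLb B hℓ, ?_⟩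
  simp [treeLevel_one_orbit_succ]

end Orbit

section UTurn

variable {d : ℕ} {U : ES d → ℝ} {hs : ℝ} {R : ℕ} {p : ES d × ES d}

lemma uturnInd_le_one (a b : ℤ) : uturnInd U hs R a b p ≤ 1 := by
  simp only [uturnInd]
  split <;> simp

lemma subUturnInd_le_one (a b : ℤ) : subUturnInd U hs R p a b ≤ 1 := by
  rw [subUturnInd]
  split
  · exact max_le (max_le (subUturnInd_le_one _ _) (subUturnInd_le_one _ _)) (uturnInd_le_one a b)
  · exact zero_le_one
termination_by (b - a).toNat
decreasing_by all_goals unfold mid; omega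

lemma subUturnInd_self (a : ℤ) : subUturnInd U hs R p a a = 0 := by
  rw [subUturnInd, dif_neg (lt_irrefl a)]

lemma subUturnInd_eq_zero_of_children {a b : ℤ} (hu : uturnInd U hs R a b p = 0)
    (hc : ∀ c ∈ treeLevel a b 1, subUturnInd U hs R p c.1 c.2 = 0) :
    subUturnInd U hs R p a b = 0 := by
  simp only [treeLevel_one, Set.mem_insert_iff, Set.mem_singleton_iff, forall_eq_or_imp,
    forall_eq] at hc
  rw [subUturnInd]
  split
  · simp [hu, hc]
  · rfl

lemma subUturnInd_eq_zero_of_mem_treeLevel_one {a b : ℤ} (h : subUturnInd U hs R p a b = 0)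
    {c : ℤ × ℤ} (hc : c ∈ treeLevel a b 1) : subUturnInd U hs R p c.1 c.2 = 0 := by
  rw [treeLevel_one] at hc
  by_cases hab : a < b
  · rw [subUturnInd, dif_pos hab] at h
    rcases hc with rfl | rfl <;> dsimp only <;> omega
  · -- a degenerate interval has degenerate halves
    rcases hc with rfl | rfl <;> rw [subUturnInd, dif_neg (by unfold mid; omega)]

lemma subUturnInd_eq_zero_of_mem_treeLevel {a b : ℤ} (h : subUturnInd U hs R p a b = 0)
    {k : ℕ} {q : ℤ × ℤ} (hq : q ∈ treeLevel a b k) : subUturnInd U hs R p q.1 q.2 = 0 := by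
  induction k generalizing q with
  | zero => rwa [show q = (a, b) from hq]
  | succ k ih =>
    obtain ⟨r, hr, hqr⟩ := hq
    exact subUturnInd_eq_zero_of_mem_treeLevel_one (ih hr) (by rw [treeLevel_one]; exact hqr)

lemma uturnInd_eq_zero_of_subUturnInd_eq_zero {a b : ℤ} (hab : a ≤ b)
    (h : subUturnInd U hs R p a b = 0) : uturnInd U hs R a b p = 0 := by
  rcases hab.lt_or_eq with hab | rfl
  · rw [subUturnInd, dif_pos hab] at h
    omega
  · simp [uturnInd]

lemma uturnInd_eq_zero_of_mem_treeLevel {a b : ℤ} {n : ℕ} (hab : b = a + 2 ^ n - 1)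
    (hc : ∀ c ∈ treeLevel a b 1, subUturnInd U hs R p c.1 c.2 = 0) {k : ℕ} (hk : 1 ≤ k)
    (hkn : k ≤ n) {q : ℤ × ℤ} (hq : q ∈ treeLevel a b k) : uturnInd U hs R q.1 q.2 p = 0 := by
  have hlen : q.2 = q.1 + 2 ^ (n - k) - 1 :=
    treeLevel_length (by rwa [Nat.add_sub_cancel' hkn]) hq
  rw [show k = 1 + (k - 1) by omega, mem_treeLevel_add] at hq
  obtain ⟨c, hc1, hqc⟩ := hq
  have hpos : (0 : ℤ) < 2 ^ (n - k) := by positivity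
  exact uturnInd_eq_zero_of_subUturnInd_eq_zero (by omega)
    (subUturnInd_eq_zero_of_mem_treeLevel (hc c hc1) hqc)

lemma subUturnInd_eq_zero_of_mem_treeLevel_one_orbit {C : ℕ → Bool} {ℓ : ℕ}
    (horbit : subUturnInd U hs R p (aEnd C ℓ) (bEnd C ℓ) = 0)
    (hext : subUturnInd U hs R p (aT C (ℓ + 1)) (bT C (ℓ + 1)) = 0) {c : ℤ × ℤ}
    (hc : c ∈ treeLevel (aEnd C (ℓ + 1)) (bEnd C (ℓ + 1)) 1) :
    subUturnInd U hs R p c.1 c.2 = 0 := by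
  rw [← add_zero (aEnd C _), ← add_zero (bEnd C _), treeLevel_one_orbit_succ] at hc
  rcases hc with rfl | rfl <;> simpa

end UTurn

section EllMin

variable {d : ℕ} {U : ES d → ℝ} {hs : ℝ} {R : ℕ} {M : ℕ} {B : ℕ → Bool} {p : ES d × ES d}

lemma ellMin_le : ellMin U hs R M B p ≤ M :=
  Nat.sInf_le (Set.mem_union_right _ rfl)

lemma uturnInd_eq_zero_of_lt_ellMin {ℓ : ℕ} (hℓ1 : 1 ≤ ℓ) (hℓ : ℓ < ellMin U hs R M B p) :
    uturnInd U hs R (aEnd B ℓ) (bEnd B ℓ) p = 0 ∧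
      subUturnInd U hs R p (aT B (ℓ + 1)) (bT B (ℓ + 1)) = 0 := by
  have hM : ℓ ≤ M - 1 := by
    have : ellMin U hs R M B p ≤ M := ellMin_le
    omega
  have hnot : ¬(uturnInd U hs R (aEnd B ℓ) (bEnd B ℓ) p = 1 ∨
      subUturnInd U hs R p (aT B (ℓ + 1)) (bT B (ℓ + 1)) = 1) := fun h =>
    hℓ.not_ge (Nat.sInf_le (Set.mem_union_left _ ⟨hℓ1, hM, h⟩))
  have hu : uturnInd U hs R (aEnd B ℓ) (bEnd B ℓ) p ≤ 1 := uturnInd_le_one _ _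
  have hsub : subUturnInd U hs R p (aT B (ℓ + 1)) (bT B (ℓ + 1)) ≤ 1 := subUturnInd_le_one _ _
  omega

lemma subUturnInd_eq_zero_of_lt_ellMin {ℓ : ℕ} (hℓ : ℓ < ellMin U hs R M B p) :
    subUturnInd U hs R p (aEnd B ℓ) (bEnd B ℓ) = 0 ∧
      subUturnInd U hs R p (aT B (ℓ + 1)) (bT B (ℓ + 1)) = 0 := by
  induction ℓ with
  | zero =>
    have hT : aT B 1 = bT B 1 := by simp [aT, bT, aEnd, bEnd]
    simp only [aEnd, bEnd, hT, subUturnInd_self, and_self]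
  | succ ℓ ih =>
    obtain ⟨horbit, hext⟩ := ih (by omega)
    obtain ⟨hu, hext'⟩ := uturnInd_eq_zero_of_lt_ellMin (by omega) hℓ
    exact ⟨subUturnInd_eq_zero_of_children hu fun _ ↦
      subUturnInd_eq_zero_of_mem_treeLevel_one_orbit horbit hext, hext'⟩

end EllMin

theorem tree_bstar_uturn_free_below_ellMin_general {d : ℕ} (U : ES d → ℝ)
    (hs : ℝ) (R : ℕ) (M : ℕ) (B : ℕ → Bool) (p : ES d × ES d)
    (lm : ℕ) (hlm : lm = ellMin U hs R M B p) (L : ℤ)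
    (hL1 : aEnd B lm ≤ L) (hL2 : L ≤ bEnd B lm)
    (Bs : ℕ → Bool) (hBs : Bs = bstar lm L (aEnd B lm) (bEnd B lm) B) :
    ∀ ℓ < lm,
      ∀ q ∈ tree ℓ (aEnd Bs ℓ + L) (bEnd Bs ℓ + L) ∪
              tree ℓ (aT Bs (ℓ + 1) + L) (bT Bs (ℓ + 1) + L),
        uturnInd U hs R q.1 q.2 p = 0 := by
  subst hBs
  intro ℓ hℓ q hq
  obtain ⟨n, rfl⟩ : ∃ n, lm = n + 1 := ⟨lm - 1, by omega⟩
  have hlen := bEnd_eq_aEnd_add B (n + 1)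
  have hlt : n < ellMin U hs R M B p := by omega
  obtain ⟨horbit, hext⟩ := subUturnInd_eq_zero_of_lt_ellMin hlt
  have hroot : ∃ r ∈ treeLevel (aEnd B (n + 1)) (bEnd B (n + 1)) (n + 1 - ℓ),
      ∃ j ≤ ℓ, q ∈ treeLevel r.1 r.2 j := by
    simp only [tree, Set.mem_union, Set.mem_iUnion, exists_prop] at hq
    rcases hq with ⟨j, hj, hqj⟩ | ⟨j, hj, hqj⟩
    · exact ⟨_, bstar_orbit_mem_treeLevel _ hlen hL1 hL2 B hℓ.le, j, hj, hqj⟩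
    · exact ⟨_, bstar_extension_mem_treeLevel _ hlen hL1 hL2 B hℓ, j, hj, hqj⟩
  obtain ⟨r, hr, j, hj, hqj⟩ := hroot
  exact uturnInd_eq_zero_of_mem_treeLevel hlen
    (fun _ ↦ subUturnInd_eq_zero_of_mem_treeLevel_one_orbit horbit hext)
    (k := n + 1 - ℓ + j) (by omega) (by omega) ((mem_treeLevel_add j).2 ⟨r, hr, hqj⟩)

/-- With `ℓ_min = ℓ_min(θ,ρ,B,h,R)`, `a_T = a_{ℓ_min}(B)`, `b_T = b_{ℓ_min}(B)`,
`L ∈ [a_T:b_T]` and `B* = B*(L,a_T,b_T,B)`: for every `ℓ < ℓ_min`, the collection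
`T([a_ℓ(B*)+L : b_ℓ(B*)+L]) ∪ T([ã_{ℓ+1}(B*)+L : b̃_{ℓ+1}(B*)+L])` is sub-U-turn free. -/
theorem tree_bstar_uturn_free_below_ellMin {d : ℕ} (U : ES d → ℝ) (hU : ContDiff ℝ 1 U)
    (hs : ℝ) (hhs : 0 < hs) (R : ℕ) (hR : 1 ≤ R) (M : ℕ) (B : ℕ → Bool) (p : ES d × ES d)
    (lm : ℕ) (hlm : lm = ellMin U hs R M B p) (L : ℤ)
    (hL1 : aEnd B lm ≤ L) (hL2 : L ≤ bEnd B lm)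
    (Bs : ℕ → Bool) (hBs : Bs = bstar lm L (aEnd B lm) (bEnd B lm) B) :
    ∀ ℓ < lm,
      ∀ q ∈ tree ℓ (aEnd Bs ℓ + L) (bEnd Bs ℓ + L) ∪
              tree ℓ (aT Bs (ℓ + 1) + L) (bT Bs (ℓ + 1) + L),
        uturnInd U hs R q.1 q.2 p = 0 :=
  tree_bstar_uturn_free_below_ellMin_general U hs R M B p lm hlm L hL1 hL2 Bs hBs
end

section
/- For the standard normal target in dimension d, h ∈ (0,2), any (θ,ρ) ∈ ℝ^{2d}, and any L ∈ ℤ, writing (θ*,ρ*) = Φ_h^L(θ,ρ), the leapfrog energy error satisfies the identity H(θ*,ρ*) − H(θ,ρ) = (h²/8)·(|θ*|² − |θ|²). -/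
open MeasureTheory

/-! For `U(θ) = |θ|²/2` the leapfrog map is linear and exactly conserves the modified Hamiltonian
`H_h = H − (h²/8)|θ|²`; so does the momentum flip, hence so does every integer iterate `Φ_h^L`,
and the energy error `H(Φ_h^L p) − H(p)` is the change of `(h²/8)|θ|²` alone. -/

section GaussLeapfrog

variable {d : ℕ} (h : ℝ)

theorem gaussHamMod_comp_gaussLeapfrog :
    gaussHamMod h ∘ gaussLeapfrog h = gaussHamMod (d := d) h := by
  funext ⟨θ, ρ⟩
  simp only [Function.comp_apply, gaussHamMod, gaussLeapfrog, ← real_inner_self_eq_norm_sq]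
  simp only [inner_sub_left, inner_sub_right, inner_add_left, inner_add_right, real_inner_smul_left,
    real_inner_smul_right, real_inner_comm θ ρ]
  ring

theorem gaussHamMod_comp_flipMom : gaussHamMod h ∘ flipMom = gaussHamMod (d := d) h := by
  funext p
  simp [gaussHamMod, flipMom]

theorem gaussHamMod_gaussLeapfrogIter (L : ℤ) (p : ES d × ES d) :
    gaussHamMod h (gaussLeapfrogIter h L p) = gaussHamMod h p := by
  have hflipped :
      gaussHamMod h ∘ (flipMom ∘ gaussLeapfrog h ∘ flipMom) = gaussHamMod (d := d) h := by
    rw [← Function.comp_assoc, gaussHamMod_comp_flipMom, ← Function.comp_assoc,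
      gaussHamMod_comp_gaussLeapfrog, gaussHamMod_comp_flipMom]
  cases L with
  | ofNat n => exact congrFun (Function.iterate_invariant (gaussHamMod_comp_gaussLeapfrog h) n) p
  | negSucc n => exact congrFun (Function.iterate_invariant hflipped (n + 1)) p

theorem gaussHam_eq_gaussHamMod_add (p : ES d × ES d) :
    gaussHam p = gaussHamMod h p + h ^ 2 / 8 * ‖p.1‖ ^ 2 := by
  simp only [gaussHam, gaussHamMod]
  ring

end GaussLeapfrog

theorem gauss_energy_error_identity_general {d : ℕ} (h : ℝ) (p : ES d × ES d) (L : ℤ) :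
    gaussHam (gaussLeapfrogIter h L p) - gaussHam p =
      h ^ 2 / 8 * (‖(gaussLeapfrogIter h L p).1‖ ^ 2 - ‖p.1‖ ^ 2) := by
  rw [gaussHam_eq_gaussHamMod_add h, gaussHam_eq_gaussHamMod_add h p,
    gaussHamMod_gaussLeapfrogIter]
  ring

/-- For the standard normal target, `h ∈ (0,2)` and `(θ*,ρ*) = Φ_h^L(θ,ρ)`,
the leapfrog energy error satisfies `H(θ*,ρ*) − H(θ,ρ) = (h²/8)(|θ*|² − |θ|²)`. -/
theorem gauss_energy_error_identity {d : ℕ} (h : ℝ) (h0 : 0 < h) (h2 : h < 2)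
    (p : ES d × ES d) (L : ℤ) :
    gaussHam (gaussLeapfrogIter h L p) - gaussHam p =
      h ^ 2 / 8 * (‖(gaussLeapfrogIter h L p).1‖ ^ 2 - ‖p.1‖ ^ 2) :=
  gauss_energy_error_identity_general h p L
end
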